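/- arXiv:2212.14346 — 2 statements merged into one kernel-verified Lean document; each statement's English description precedes it below -/
import Mathlib

section
/- Let $(S(t))_{t\ge 0}$ be a semigroup of bounded injective linear operators on a Banach space $X$. For $g : [a,b] \to X$ define $(\delta_{S,1} g)(t_1, t_2) := S(t_1 - a)(g(t_2) - g(t_1))$, and for $f : [a,b]^2_< \to X$ define $(\delta_{S,2} f)(r,s,t) := -f(s,t) + S(s-r)f(r,t) - S(s-r)f(r,s)$. Then the image of $\delta_{S,1}$ equals the kernel of $\delta_{S,2}$: a function $f : [a,b]^2_< \to X$ satisfies $\delta_{S,2} f \equiv 0$ on $[a,b]^3_<$ if and only if there exists $g : [a,b] \to X$ with $f = \delta_{S,1} g$. -/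
/-!
A cocycle `f` is the coboundary of `t ↦ f a t`: this is the
cocycle identity at `r = a`. Conversely, `S (s - a) = S (s - r) ∘ S (r - a)` lets one pull
`S (s - r)` out of `δ_{S,1} g (r, ·)`, and the three terms of `δ_{S,2} (δ_{S,1} g)` cancel.
-/

namespace SemigroupCoboundary

variable {X : Type*} [AddCommGroup X] [Module ℝ X] [TopologicalSpace X] (S : ℝ → X →L[ℝ] X)

def delta₁ (a : ℝ) (g : ℝ → X) (s t : ℝ) : X := S (s - a) (g t - g s)

def delta₂ (f : ℝ → ℝ → X) (r s t : ℝ) : X := -(f s t) + S (s - r) (f r t) - S (s - r) (f r s)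

variable {S}

theorem eq_delta₁_of_delta₂_eq_zero {f : ℝ → ℝ → X} {a s t : ℝ} (h : delta₂ S f a s t = 0) :
    f s t = delta₁ S a (f a) s t := by
  rw [delta₂] at h
  rw [delta₁, map_sub]
  linear_combination (norm := abel) -h

theorem comp_of_semigroup (hsg : ∀ u v : ℝ, 0 ≤ u → 0 ≤ v → S (u + v) = (S u).comp (S v))
    {a r s : ℝ} (har : a ≤ r) (hrs : r ≤ s) : S (s - a) = (S (s - r)).comp (S (r - a)) := by
  simpa using hsg (s - r) (r - a) (by linarith) (by linarith)

theorem delta₂_delta₁ (hsg : ∀ u v : ℝ, 0 ≤ u → 0 ≤ v → S (u + v) = (S u).comp (S v))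
    (g : ℝ → X) {a r s : ℝ} (har : a ≤ r) (hrs : r ≤ s) (t : ℝ) :
    delta₂ S (delta₁ S a g) r s t = 0 := by
  simp only [delta₂, delta₁, comp_of_semigroup hsg har hrs, ContinuousLinearMap.comp_apply,
    map_sub]
  abel

end SemigroupCoboundary

open SemigroupCoboundary in
theorem stmt2_general {X : Type*} [NormedAddCommGroup X] [NormedSpace ℝ X]
    (S : ℝ → X →L[ℝ] X)
    (hsg : ∀ u v : ℝ, 0 ≤ u → 0 ≤ v → S (u + v) = (S u).comp (S v))
    (a b : ℝ) (f : ℝ → ℝ → X) :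
    (∀ r s t : ℝ, a ≤ r → r ≤ s → s ≤ t → t ≤ b →
        -(f s t) + S (s - r) (f r t) - S (s - r) (f r s) = 0)
    ↔ ∃ g : ℝ → X, ∀ s t : ℝ, a ≤ s → s ≤ t → t ≤ b →
        f s t = S (s - a) (g t - g s) := by
  constructor
  · intro hf
    exact ⟨f a, fun s t has hst htb => eq_delta₁_of_delta₂_eq_zero (hf a s t le_rfl has hst htb)⟩
  · rintro ⟨g, hg⟩ r s t har hrs hst htb
    have hrt := hrs.trans hst
    simpa only [delta₂, delta₁, ← hg s t (har.trans hrs) hst htb, ← hg r t har hrt htb,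
      ← hg r s har hrs (hst.trans htb)] using delta₂_delta₁ hsg g har hrs t

/-- `Im (δ_{S,1}) = Ker (δ_{S,2})`. -/
theorem stmt2 {X : Type*} [NormedAddCommGroup X] [NormedSpace ℝ X]
    (S : ℝ → X →L[ℝ] X) (hS0 : S 0 = ContinuousLinearMap.id ℝ X)
    (hsg : ∀ u v : ℝ, 0 ≤ u → 0 ≤ v → S (u + v) = (S u).comp (S v))
    (hinj : ∀ t : ℝ, 0 ≤ t → Function.Injective (S t))
    (a b : ℝ) (hab : a ≤ b) (f : ℝ → ℝ → X) :
    (∀ r s t : ℝ, a ≤ r → r ≤ s → s ≤ t → t ≤ b →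
        -(f s t) + S (s - r) (f r t) - S (s - r) (f r s) = 0)
    ↔ ∃ g : ℝ → X, ∀ s t : ℝ, a ≤ s → s ≤ t → t ≤ b →
        f s t = S (s - a) (g t - g s) :=
  stmt2_general S hsg a b f
end

section
/- Let $\hat\sigma \in C^2_b(\mathbb{R})$ and $\alpha \in (0, 1/2)$. The Nemytskii operator $\sigma(f) = \hat\sigma \circ f$ satisfies: there is a constant $C_*$ (depending only on $\|\hat\sigma'\|_\infty$, $\|\hat\sigma''\|_\infty$ and the embedding $W^{2\alpha,2}((0,1)) \hookrightarrow L^\infty$ when $\alpha > 1/4$) such that for all $y_1, y_2 \in W^{2\alpha,2}((0,1))$, $[\sigma(y_1) - \sigma(y_2)]^2_{W^{2\alpha,2}} \le 2\|\hat\sigma'\|_\infty^2 [y_1 - y_2]^2_{W^{2\alpha,2}} + 2 \|\hat\sigma''\|_\infty^2 \|y_1 - y_2\|_\infty^2 \big([y_1]^2_{W^{2\alpha,2}} + [y_2]^2_{W^{2\alpha,2}}\big)$, where $[u]^2_{W^{2\alpha,2}} = \int_0^1\int_0^1 \frac{|u(\xi) - u(\eta)|^2}{|\xi - \eta|^{1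 + 4\alpha}} d\xi\, d\eta$ is the Gagliardo seminorm. -/
/-!
Along the segments `t ↦ y₁(η) + t (y₁(ξ) - y₁(η))` and `t ↦ y₂(η) + t (y₂(ξ) - y₂(η))` the mean
value theorem writes the mixed difference `(σ̂ y₁(ξ) - σ̂ y₂(ξ)) - (σ̂ y₁(η) - σ̂ y₂(η))` as
`σ̂'(p) ((y₁ - y₂)(ξ) - (y₁ - y₂)(η)) + (σ̂'(p) - σ̂'(q)) (y₂(ξ) - y₂(η))` with two points `p`, `q`
such that `p - q` is a convex combination of `(y₁ - y₂)(ξ)` and `(y₁ - y₂)(η)`, hence `|p - q| ≤ M`.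
Squaring with `(a + b)² ≤ 2a² + 2b²` bounds the integrand pointwise, and integrating against the
weight `|ξ - η|^{-(1+4α)}` gives the estimate.
-/

open MeasureTheory Set

section MixedDifference

variable {f f' f'' : ℝ → ℝ} {C₁ C₂ M : ℝ}

theorem abs_sub_le_mul_abs_sub_of_hasDerivAt {C : ℝ} (hf : ∀ x, HasDerivAt f (f' x) x)
    (hC : ∀ x, |f' x| ≤ C) (x y : ℝ) : |f x - f y| ≤ C * |x - y| := by
  simpa [Real.norm_eq_abs] using convex_univ.norm_image_sub_le_of_norm_hasDerivWithin_le
    (fun z _ => (hf z).hasDerivWithinAt) (fun z _ => by simpa [Real.norm_eq_abs] using hC z)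
    (mem_univ y) (mem_univ x)

theorem exists_sub_sub_sub_eq_of_hasDerivAt (hf : ∀ x, HasDerivAt f (f' x) x) (u v u' v' : ℝ) :
    ∃ c ∈ Ioo (0 : ℝ) 1, (f u - f v) - (f u' - f v') =
      f' (u' + c * (u - u')) * (u - u') - f' (v' + c * (v - v')) * (v - v') := by
  have hderiv (t : ℝ) : HasDerivAt (fun t => f (u' + t * (u - u')) - f (v' + t * (v - v')))
      (f' (u' + t * (u - u')) * (u - u') - f' (v' + t * (v - v')) * (v - v')) t := by
    have hu := ((hasDerivAt_id t).mul_const (u - u')).const_add u'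
    have hv := ((hasDerivAt_id t).mul_const (v - v')).const_add v'
    simp only [id, one_mul] at hu hv
    exact ((hf _).comp t hu).sub ((hf _).comp t hv)
  obtain ⟨c, hc, hslope⟩ := exists_hasDerivAt_eq_slope _ _ one_pos
    (fun t _ => (hderiv t).continuousAt.continuousWithinAt) (fun t _ => hderiv t)
  refine ⟨c, hc, ?_⟩
  rw [hslope]
  ring_nf

theorem abs_sub_sub_sub_le_of_hasDerivAt (hf : ∀ x, HasDerivAt f (f' x) x)
    (hf' : ∀ x, HasDerivAt f' (f'' x) x) (hC₁ : ∀ x, |f' x| ≤ C₁) (hC₂ : ∀ x, |f'' x| ≤ C₂)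
    {u v u' v' : ℝ} (huv : |u - v| ≤ M) (huv' : |u' - v'| ≤ M) :
    |(f u - f v) - (f u' - f v')| ≤ C₁ * |(u - v) - (u' - v')| + C₂ * M * |v - v'| := by
  obtain ⟨c, ⟨hc₀, hc₁⟩, hmvt⟩ := exists_sub_sub_sub_eq_of_hasDerivAt hf u v u' v'
  set p := u' + c * (u - u')
  set q := v' + c * (v - v')
  have hsplit : f' p * (u - u') - f' q * (v - v') =
      f' p * ((u - v) - (u' - v')) + (f' p - f' q) * (v - v') := by ring
  have hpq : |p - q| ≤ M := by
    have hconv : p - q = c * (u - v) + (1 - c) * (u' - v') := by ring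
    obtain ⟨h₁, h₂⟩ := abs_le.mp huv
    obtain ⟨h₁', h₂'⟩ := abs_le.mp huv'
    rw [hconv, abs_le]
    constructor <;> nlinarith
  rw [hmvt, hsplit]
  calc |f' p * ((u - v) - (u' - v')) + (f' p - f' q) * (v - v')|
      ≤ |f' p| * |(u - v) - (u' - v')| + |f' p - f' q| * |v - v'| := by
        rw [← abs_mul, ← abs_mul]; exact abs_add_le _ _
    _ ≤ C₁ * |(u - v) - (u' - v')| + C₂ * M * |v - v'| := by
        gcongr
        · exact hC₁ p
        · exact (abs_sub_le_mul_abs_sub_of_hasDerivAt hf' hC₂ p q).trans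
            (mul_le_mul_of_nonneg_left hpq ((abs_nonneg _).trans (hC₂ 0)))

theorem sq_sub_sub_sub_le_of_hasDerivAt (hf : ∀ x, HasDerivAt f (f' x) x)
    (hf' : ∀ x, HasDerivAt f' (f'' x) x) (hC₁ : ∀ x, |f' x| ≤ C₁) (hC₂ : ∀ x, |f'' x| ≤ C₂)
    {u v u' v' : ℝ} (huv : |u - v| ≤ M) (huv' : |u' - v'| ≤ M) :
    ((f u - f v) - (f u' - f v')) ^ 2 ≤
      2 * C₁ ^ 2 * ((u - v) - (u' - v')) ^ 2 + 2 * C₂ ^ 2 * M ^ 2 * (v - v') ^ 2 := by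
  have h := abs_sub_sub_sub_le_of_hasDerivAt hf hf' hC₁ hC₂ huv huv'
  calc ((f u - f v) - (f u' - f v')) ^ 2
      ≤ (C₁ * |(u - v) - (u' - v')| + C₂ * M * |v - v'|) ^ 2 := by
        rw [← sq_abs]; gcongr
    _ ≤ 2 * ((C₁ * |(u - v) - (u' - v')|) ^ 2 + (C₂ * M * |v - v'|) ^ 2) := add_sq_le
    _ = 2 * C₁ ^ 2 * ((u - v) - (u' - v')) ^ 2 + 2 * C₂ ^ 2 * M ^ 2 * (v - v') ^ 2 := by
        simp only [mul_pow, sq_abs]; ring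

end MixedDifference

theorem stmt13_general (α : ℝ) (σ σ' σ'' : ℝ → ℝ)
    (hd1 : ∀ x : ℝ, HasDerivAt σ (σ' x) x)
    (hd2 : ∀ x : ℝ, HasDerivAt σ' (σ'' x) x)
    (C1 C2 : ℝ) (hb1 : ∀ x : ℝ, |σ' x| ≤ C1) (hb2 : ∀ x : ℝ, |σ'' x| ≤ C2)
    (y1 y2 : ℝ → ℝ) (M : ℝ)
    (hM : ∀ ξ ∈ Set.Ioo (0:ℝ) 1, |y1 ξ - y2 ξ| ≤ M)
    (hint1 : IntegrableOn
      (fun p : ℝ × ℝ => ((y1 p.1 - y2 p.1) - (y1 p.2 - y2 p.2)) ^ 2 / |p.1 - p.2| ^ (1 + 4 * α))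
      (Set.Ioo (0:ℝ) 1 ×ˢ Set.Ioo (0:ℝ) 1))
    (hint2 : IntegrableOn
      (fun p : ℝ × ℝ => (y1 p.1 - y1 p.2) ^ 2 / |p.1 - p.2| ^ (1 + 4 * α))
      (Set.Ioo (0:ℝ) 1 ×ˢ Set.Ioo (0:ℝ) 1))
    (hint3 : IntegrableOn
      (fun p : ℝ × ℝ => (y2 p.1 - y2 p.2) ^ 2 / |p.1 - p.2| ^ (1 + 4 * α))
      (Set.Ioo (0:ℝ) 1 ×ˢ Set.Ioo (0:ℝ) 1)) :
    (∫ p in Set.Ioo (0:ℝ) 1 ×ˢ Set.Ioo (0:ℝ) 1,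
        ((σ (y1 p.1) - σ (y2 p.1)) - (σ (y1 p.2) - σ (y2 p.2))) ^ 2 / |p.1 - p.2| ^ (1 + 4 * α))
      ≤ 2 * C1 ^ 2 * (∫ p in Set.Ioo (0:ℝ) 1 ×ˢ Set.Ioo (0:ℝ) 1,
          ((y1 p.1 - y2 p.1) - (y1 p.2 - y2 p.2)) ^ 2 / |p.1 - p.2| ^ (1 + 4 * α))
        + 2 * C2 ^ 2 * M ^ 2 *
          ((∫ p in Set.Ioo (0:ℝ) 1 ×ˢ Set.Ioo (0:ℝ) 1,
              (y1 p.1 - y1 p.2) ^ 2 / |p.1 - p.2| ^ (1 + 4 * α))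
            + (∫ p in Set.Ioo (0:ℝ) 1 ×ˢ Set.Ioo (0:ℝ) 1,
              (y2 p.1 - y2 p.2) ^ 2 / |p.1 - p.2| ^ (1 + 4 * α))) := by
  have hpointwise : ∀ p ∈ Ioo (0:ℝ) 1 ×ˢ Ioo (0:ℝ) 1,
      ((σ (y1 p.1) - σ (y2 p.1)) - (σ (y1 p.2) - σ (y2 p.2))) ^ 2 / |p.1 - p.2| ^ (1 + 4 * α) ≤
        2 * C1 ^ 2 * (((y1 p.1 - y2 p.1) - (y1 p.2 - y2 p.2)) ^ 2 / |p.1 - p.2| ^ (1 + 4 * α))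
        + 2 * C2 ^ 2 * M ^ 2 * ((y1 p.1 - y1 p.2) ^ 2 / |p.1 - p.2| ^ (1 + 4 * α)
          + (y2 p.1 - y2 p.2) ^ 2 / |p.1 - p.2| ^ (1 + 4 * α)) := by
    rintro ⟨ξ, η⟩ ⟨hξ, hη⟩
    have h := sq_sub_sub_sub_le_of_hasDerivAt hd1 hd2 hb1 hb2 (hM ξ hξ) (hM η hη)
    have hy1_term : 0 ≤ 2 * C2 ^ 2 * M ^ 2 * (y1 ξ - y1 η) ^ 2 := by positivity
    rw [← mul_div_assoc, ← add_div, ← mul_div_assoc, ← add_div]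
    exact div_le_div_of_nonneg_right (by linarith) (by positivity)
  have hsum : IntegrableOn (fun p : ℝ × ℝ => (y1 p.1 - y1 p.2) ^ 2 / |p.1 - p.2| ^ (1 + 4 * α)
      + (y2 p.1 - y2 p.2) ^ 2 / |p.1 - p.2| ^ (1 + 4 * α)) (Ioo (0:ℝ) 1 ×ˢ Ioo (0:ℝ) 1) :=
    hint2.add hint3
  -- `integral_mono_of_nonneg` needs no measurability of the left integrand: it is nonnegative.
  calc _ ≤ ∫ p in Ioo (0:ℝ) 1 ×ˢ Ioo (0:ℝ) 1,
        2 * C1 ^ 2 * (((y1 p.1 - y2 p.1) - (y1 p.2 - y2 p.2)) ^ 2 / |p.1 - p.2| ^ (1 + 4 * α))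
        + 2 * C2 ^ 2 * M ^ 2 * ((y1 p.1 - y1 p.2) ^ 2 / |p.1 - p.2| ^ (1 + 4 * α)
          + (y2 p.1 - y2 p.2) ^ 2 / |p.1 - p.2| ^ (1 + 4 * α)) :=
        integral_mono_of_nonneg (.of_forall fun _ => by positivity)
          ((hint1.const_mul _).add (hsum.const_mul _))
          (ae_restrict_of_forall_mem (measurableSet_Ioo.prod measurableSet_Ioo) hpointwise)
    _ = _ := by
        rw [integral_add (hint1.const_mul _) (hsum.const_mul _),
          integral_const_mul, integral_const_mul, integral_add hint2 hint3]

/-- Gagliardo seminorm estimate for the Nemytskii operator `σ(y) = σ̂ ∘ y`: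
`[σ(y₁)-σ(y₂)]² ≤ 2‖σ̂'‖∞² [y₁-y₂]² + 2‖σ̂''‖∞² ‖y₁-y₂‖∞² ([y₁]² + [y₂]²)`. -/
theorem stmt13 (α : ℝ) (hα : α ∈ Set.Ioo (0:ℝ) (1/2)) (σ σ' σ'' : ℝ → ℝ)
    (hd1 : ∀ x : ℝ, HasDerivAt σ (σ' x) x)
    (hd2 : ∀ x : ℝ, HasDerivAt σ' (σ'' x) x)
    (C1 C2 : ℝ) (hb1 : ∀ x : ℝ, |σ' x| ≤ C1) (hb2 : ∀ x : ℝ, |σ'' x| ≤ C2)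
    (y1 y2 : ℝ → ℝ) (M : ℝ)
    (hM : ∀ ξ ∈ Set.Ioo (0:ℝ) 1, |y1 ξ - y2 ξ| ≤ M)
    (hy1 : ContinuousOn y1 (Set.Icc 0 1)) (hy2 : ContinuousOn y2 (Set.Icc 0 1))
    (hint1 : IntegrableOn
      (fun p : ℝ × ℝ => ((y1 p.1 - y2 p.1) - (y1 p.2 - y2 p.2)) ^ 2 / |p.1 - p.2| ^ (1 + 4 * α))
      (Set.Ioo (0:ℝ) 1 ×ˢ Set.Ioo (0:ℝ) 1))
    (hint2 : IntegrableOn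
      (fun p : ℝ × ℝ => (y1 p.1 - y1 p.2) ^ 2 / |p.1 - p.2| ^ (1 + 4 * α))
      (Set.Ioo (0:ℝ) 1 ×ˢ Set.Ioo (0:ℝ) 1))
    (hint3 : IntegrableOn
      (fun p : ℝ × ℝ => (y2 p.1 - y2 p.2) ^ 2 / |p.1 - p.2| ^ (1 + 4 * α))
      (Set.Ioo (0:ℝ) 1 ×ˢ Set.Ioo (0:ℝ) 1)) :
    (∫ p in Set.Ioo (0:ℝ) 1 ×ˢ Set.Ioo (0:ℝ) 1,
        ((σ (y1 p.1) - σ (y2 p.1)) - (σ (y1 p.2) - σ (y2 p.2))) ^ 2 / |p.1 - p.2| ^ (1 + 4 * α))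
      ≤ 2 * C1 ^ 2 * (∫ p in Set.Ioo (0:ℝ) 1 ×ˢ Set.Ioo (0:ℝ) 1,
          ((y1 p.1 - y2 p.1) - (y1 p.2 - y2 p.2)) ^ 2 / |p.1 - p.2| ^ (1 + 4 * α))
        + 2 * C2 ^ 2 * M ^ 2 *
          ((∫ p in Set.Ioo (0:ℝ) 1 ×ˢ Set.Ioo (0:ℝ) 1,
              (y1 p.1 - y1 p.2) ^ 2 / |p.1 - p.2| ^ (1 + 4 * α))
            + (∫ p in Set.Ioo (0:ℝ) 1 ×ˢ Set.Ioo (0:ℝ) 1,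
              (y2 p.1 - y2 p.2) ^ 2 / |p.1 - p.2| ^ (1 + 4 * α))) :=
  stmt13_general α σ σ' σ'' hd1 hd2 C1 C2 hb1 hb2 y1 y2 M hM hint1 hint2 hint3
end
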